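/- Let 0<p<∞ and φ∈𝒢_p with φ(1)=1 and lim_{t→0+} φ(t)=0. Let A_1,…,A_m be pairwise disjoint measurable subsets of ℝ^n of finite measure, let a_1>a_2>…>a_m>0, and let f = Σ_{j=1}^m a_j · χ_{A_j} be a simple function with ‖f|L_p(ℝ^n)‖ = 1. Then there exists a simple function g on ℝ^n such that g*(t) = f*(t) for all t>0 and ‖g|ℳ_{φ,p}(ℝ^n)‖ ≤ 1. -/

import Mathlib

open MeasureTheory Filter Set ENNReal

noncomputable section

abbrev En (n : ℕ) := EuclideanSpace ℝ (Fin n)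

/-- The class `𝒢_p`: nondecreasing positive functions on `(0,∞)` such that
`t ↦ φ(t) t^{-n/p}` is nonincreasing. -/
def GClass (n : ℕ) (p : ℝ) (φ : ℝ → ℝ) : Prop :=
  (∀ t : ℝ, 0 < t → 0 < φ t) ∧
    ∀ t r : ℝ, 0 < t → t ≤ r → φ t ≤ φ r ∧ φ r ≤ φ t * (r / t) ^ ((n : ℝ) / p)

/-- The axis-parallel compact cube centred at `x` with side length `r`. -/
def cube (n : ℕ) (x : En n) (r : ℝ) : Set (En n) := {y | ∀ i, |y i - x i| ≤ r / 2}

/-- The generalised Morrey quasi-norm `‖f | ℳ_{φ,p}(ℝⁿ)‖`. -/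
def morreyNorm {F : Type*} [NormedAddCommGroup F] (n : ℕ) (p : ℝ) (φ : ℝ → ℝ)
    (f : En n → F) : ℝ≥0∞ :=
  ⨆ (x : En n) (r : ℝ) (_ : 0 < r),
    ENNReal.ofReal (φ r) *
      ((volume (cube n x r))⁻¹ *
        ∫⁻ y in cube n x r, ENNReal.ofReal (‖f y‖ ^ p)) ^ (1 / p)

/-- The decreasing rearrangement `f*(t) = inf{σ>0 : |{x : |f(x)|>σ}| ≤ t}`. -/
def rearr {F : Type*} [NormedAddCommGroup F] (n : ℕ) (f : En n → F) (t : ℝ) : ℝ≥0∞ :=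
  sInf {σ : ℝ≥0∞ | 0 < σ ∧ volume {x : En n | σ < ENNReal.ofReal ‖f x‖} ≤ ENNReal.ofReal t}

/-- The growth envelope function of the generalised Morrey space `ℳ_{φ,p}(ℝⁿ)`. -/
def morreyEnvelope (n : ℕ) (p : ℝ) (φ : ℝ → ℝ) (t : ℝ) : ℝ≥0∞ :=
  ⨆ (f : En n → ℝ) (_ : Measurable f) (_ : morreyNorm n p φ f ≤ 1), rearr n f t

end

/-!
Only the distribution function of `f` has to be kept, so each level set `A_j` may be replaced by
any set of the same measure. Choose `ε ∈ (0, 1]` with `φ(ε) M ≤ 1`, where `M` bounds the `|a_j|`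
(possible since `φ(0+) = 0`), cut the measure of `A_j` into finitely many slabs of width at most
`ε` in every direction, and place all slabs at mutual distance `> 1` along one axis. A cube of
side `r ≤ 1` then meets at most one slab, in measure at most `min(ε, r)^n`, and the `𝒢_p`
condition gives `φ(r)^p r^{-n} M^p min(ε, r)^n ≤ (φ(ε) M)^p ≤ 1`. For `r ≥ 1` the `𝒢_p` condition
gives `φ(r) r^{-n/p} ≤ φ(1) = 1`, and `‖g‖_p = ‖f‖_p = 1` finishes the estimate.
-/

section Boxes

variable {n : ℕ}

def box (c w : Fin n → ℝ) : Set (En n) := {y | ∀ l, y l ∈ Icc (c l) (c l + w l)}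

lemma volume_setOf_forall_mem (I : Fin n → Set ℝ) :
    volume {y : En n | ∀ l, y l ∈ I l} = ∏ l, volume (I l) := by
  have h : {y : En n | ∀ l, y l ∈ I l} =
      (MeasurableEquiv.toLp 2 (Fin n → ℝ)).symm ⁻¹' univ.pi I := by
    ext y
    simp [Set.mem_pi]
  rw [h, (EuclideanSpace.volume_preserving_symm_measurableEquiv_toLp
    (Fin n)).measure_preimage_equiv, volume_pi_pi]

lemma measurableSet_box (c w : Fin n → ℝ) : MeasurableSet (box c w) := by
  have : box c w = ⋂ l, (fun y : En n => y l) ⁻¹' Icc (c l) (c l + w l) := by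
    ext y; simp [box]
  rw [this]
  exact MeasurableSet.iInter fun l => measurableSet_Icc.preimage (by fun_prop)

lemma volume_box (c w : Fin n → ℝ) :
    volume (box c w) = ∏ l, ENNReal.ofReal (w l) := by
  simp_rw [box, volume_setOf_forall_mem, Real.volume_Icc, add_sub_cancel_left]

lemma cube_eq_box (x : En n) (r : ℝ) : cube n x r = box (fun l => x l - r / 2) (fun _ => r) := by
  ext y
  simp only [cube, box, mem_ofPred_eq, mem_Icc, abs_le]
  refine forall_congr' fun l => ?_
  constructor <;> rintro ⟨h₁, h₂⟩ <;> constructor <;> linarith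

lemma volume_cube (x : En n) {r : ℝ} (hr : 0 ≤ r) :
    volume (cube n x r) = ENNReal.ofReal (r ^ n) := by
  rw [cube_eq_box, volume_box, Finset.prod_const, Finset.card_univ, Fintype.card_fin,
    ENNReal.ofReal_pow hr]

lemma abs_sub_le_of_mem_cube {x y y' : En n} {r : ℝ} (hy : y ∈ cube n x r) (hy' : y' ∈ cube n x r)
    (l : Fin n) : |y l - y' l| ≤ r := by
  have h₁ := abs_le.1 (hy l)
  have h₂ := abs_le.1 (hy' l)
  exact abs_le.2 ⟨by linarith, by linarith⟩

lemma volume_Icc_inter_Icc_le (a b c d : ℝ) :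
    volume (Icc a b ∩ Icc c d) ≤ ENNReal.ofReal (min (b - a) (d - c)) := by
  rcases le_total (b - a) (d - c) with h | h
  · rw [min_eq_left h, ← Real.volume_Icc]
    exact measure_mono inter_subset_left
  · rw [min_eq_right h, ← Real.volume_Icc]
    exact measure_mono inter_subset_right

lemma volume_box_inter_cube_le {c w : Fin n → ℝ} {ε : ℝ} (hw : ∀ l, w l ≤ ε) (x : En n) (r : ℝ) :
    volume (box c w ∩ cube n x r) ≤ ENNReal.ofReal (min ε r) ^ n := by
  have h : box c w ∩ cube n x r =
      {y : En n | ∀ l, y l ∈ Icc (c l) (c l + w l) ∩ Icc (x l - r / 2) (x l - r / 2 + r)} := by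
    rw [cube_eq_box]
    ext y
    simp only [box, mem_inter_iff, mem_ofPred_eq, forall_and]
  calc volume (box c w ∩ cube n x r)
      ≤ ∏ _l : Fin n, ENNReal.ofReal (min ε r) := by
        rw [h, volume_setOf_forall_mem]
        refine Finset.prod_le_prod' fun l _ => (volume_Icc_inter_Icc_le _ _ _ _).trans ?_
        simp only [add_sub_cancel_left]
        exact ENNReal.ofReal_le_ofReal (min_le_min_right _ (hw l))
    _ = ENNReal.ofReal (min ε r) ^ n := by simp

end Boxes

section Slabs

variable {n : ℕ} (i₀ : Fin n)

-- Slabs of width at most `1` placed at `3 * k` along `i₀` are more than `1` apart.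
def slab (ε t : ℝ) (k : ℕ) : Set (En n) :=
  box (Pi.single i₀ (3 * k)) (Function.update (fun _ => ε) i₀ t)

variable {i₀}

lemma measurableSet_slab (ε t : ℝ) (k : ℕ) : MeasurableSet (slab i₀ ε t k) :=
  measurableSet_box _ _

lemma volume_slab (ε t : ℝ) (k : ℕ) :
    volume (slab i₀ ε t k) = ENNReal.ofReal t * ENNReal.ofReal ε ^ (n - 1) := by
  rw [slab, volume_box, Finset.prod_congr rfl fun l _ =>
      Function.apply_update (fun _ => ENNReal.ofReal) (fun _ => ε) i₀ t l,
    Finset.prod_update_of_mem (Finset.mem_univ _), Finset.prod_const,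
    Finset.card_sdiff, Finset.card_univ, Fintype.card_fin]
  simp

lemma mem_Icc_of_mem_slab {ε t : ℝ} {k : ℕ} {y : En n} (hy : y ∈ slab i₀ ε t k) :
    y i₀ ∈ Icc (3 * k : ℝ) (3 * k + t) := by
  simpa using hy i₀

lemma volume_slab_inter_cube_le {ε t : ℝ} (ht : t ≤ ε) (k : ℕ) (x : En n) (r : ℝ) :
    volume (slab i₀ ε t k ∩ cube n x r) ≤ ENNReal.ofReal (min ε r) ^ n := by
  refine volume_box_inter_cube_le (fun l => ?_) x r
  by_cases hl : l = i₀
  · subst hl; simpa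
  · simp [hl]

lemma eq_of_mem_slab_of_abs_sub_le {ε t t' : ℝ} {k k' : ℕ} {y y' : En n}
    (hy : y ∈ slab i₀ ε t k) (hy' : y' ∈ slab i₀ ε t' k') (ht : t ≤ 1) (ht' : t' ≤ 1)
    (hyy' : |y i₀ - y' i₀| ≤ 1) : k = k' := by
  obtain ⟨h₁, h₂⟩ := mem_Icc_of_mem_slab hy
  obtain ⟨h₁', h₂'⟩ := mem_Icc_of_mem_slab hy'
  obtain ⟨h₃, h₄⟩ := abs_le.1 hyy'
  rcases lt_trichotomy k k' with hk | hk | hk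
  · have : (k : ℝ) + 1 ≤ k' := by exact_mod_cast hk
    linarith
  · exact hk
  · have : (k' : ℝ) + 1 ≤ k := by exact_mod_cast hk
    linarith

lemma disjoint_slab {ε t t' : ℝ} {k k' : ℕ} (ht : t ≤ 1) (ht' : t' ≤ 1) (hk : k ≠ k') :
    Disjoint (slab i₀ ε t k) (slab i₀ ε t' k') :=
  Set.disjoint_left.2 fun _ hy hy' => hk (eq_of_mem_slab_of_abs_sub_le hy hy' ht ht' (by simp))

/-- A cube of side at most `1` meets at most one of the slabs. -/
lemma volume_iUnion_slab_inter_cube_le {κ : Type*} {pos : κ → ℕ} (hpos : pos.Injective)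
    {ε : ℝ} {t : κ → ℝ} (ht : ∀ k, t k ≤ ε) (hε : ε ≤ 1) (x : En n) {r : ℝ} (hr : r ≤ 1) :
    volume ((⋃ k, slab i₀ ε (t k) (pos k)) ∩ cube n x r) ≤ ENNReal.ofReal (min ε r) ^ n := by
  rcases ((⋃ k, slab i₀ ε (t k) (pos k)) ∩ cube n x r).eq_empty_or_nonempty
    with h | ⟨y₀, hy₀, hy₀x⟩
  · simp [h]
  obtain ⟨k₀, hy₀⟩ := mem_iUnion.1 hy₀
  refine le_trans (measure_mono ?_) (volume_slab_inter_cube_le (i₀ := i₀) (ht k₀) (pos k₀) x r)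
  rintro y ⟨hy, hyx⟩
  obtain ⟨k, hy⟩ := mem_iUnion.1 hy
  have hk : pos k = pos k₀ := eq_of_mem_slab_of_abs_sub_le hy hy₀ ((ht k).trans hε)
    ((ht k₀).trans hε) ((abs_sub_le_of_mem_cube hyx hy₀x i₀).trans hr)
  exact ⟨hpos hk ▸ hy, hyx⟩

end Slabs

lemma exists_natCast_mul_eq_of_le {L ε : ℝ} (hL : 0 ≤ L) (hε : 0 < ε) :
    ∃ N : ℕ, ∃ t, 0 ≤ t ∧ t ≤ ε ∧ N * t = L := by
  set N := ⌈L / ε⌉₊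
  refine ⟨N, L / N, div_nonneg hL N.cast_nonneg, ?_, ?_⟩
  · rcases (Nat.cast_nonneg (α := ℝ) N).eq_or_lt with hN | hN
    · simp [← hN, hε.le]
    · rw [div_le_iff₀ hN, ← div_le_iff₀' hε]; exact Nat.le_ceil _
  · rcases eq_or_ne (N : ℝ) 0 with hN | hN
    · have hLε : L ≤ 0 * ε := (div_le_iff₀ hε).1 (Nat.ceil_eq_zero.1 (Nat.cast_eq_zero.1 hN))
      rw [hN, zero_mul, le_antisymm (by simpa using hLε) hL]
    · exact mul_div_cancel₀ _ hN

theorem exists_sparse_disjoint_family {n : ℕ} {ι : Type*} [Countable ι] (i₀ : Fin n) {ε : ℝ}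
    (hε : 0 < ε) (hε₁ : ε ≤ 1) (v : ι → ℝ≥0∞) (hv : ∀ j, v j ≠ ⊤) :
    ∃ S : ι → Set (En n), (∀ j, MeasurableSet (S j)) ∧ Pairwise (Function.onFun Disjoint S) ∧
      (∀ j, volume (S j) = v j) ∧
      ∀ x r, r ≤ 1 → volume ((⋃ j, S j) ∩ cube n x r) ≤ ENNReal.ofReal (min ε r) ^ n := by
  obtain ⟨e, he⟩ := Countable.exists_injective_nat ι
  have hL : ∀ j, 0 ≤ (v j).toReal / ε ^ (n - 1) := fun j => by positivity
  choose N t ht₀ htε hNt using fun j => exists_natCast_mul_eq_of_le (hL j) hε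
  have ht₁ : ∀ j, t j ≤ 1 := fun j => (htε j).trans hε₁
  have hpos : (fun q : ι × ℕ => Nat.pair (e q.1) q.2).Injective := fun q q' h => by
    obtain ⟨h₁, h₂⟩ := Nat.pair_eq_pair.1 h
    exact Prod.ext (he h₁) h₂
  have hne : ∀ {j j' i i'}, (j, i) ≠ (j', i') → Nat.pair (e j) i ≠ Nat.pair (e j') i' :=
    fun h => hpos.ne h
  refine ⟨fun j => ⋃ i ∈ Finset.range (N j), slab i₀ ε (t j) (Nat.pair (e j) i),
    fun j => Finset.measurableSet_biUnion _ fun i _ => measurableSet_slab _ _ _, ?_, ?_, ?_⟩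
  · intro j j' hjj'
    simp only [Function.onFun, Set.disjoint_iUnion_left, Set.disjoint_iUnion_right]
    exact fun i _ i' _ => disjoint_slab (ht₁ j) (ht₁ j') (hne fun h => hjj' (Prod.ext_iff.1 h).1)
  · intro j
    dsimp only
    rw [measure_biUnion_finset (fun i _ i' _ hii' => disjoint_slab (ht₁ j) (ht₁ j)
      (hne fun h => hii' (Prod.ext_iff.1 h).2)) fun i _ => measurableSet_slab _ _ _]
    simp only [volume_slab, Finset.sum_const, Finset.card_range, nsmul_eq_mul]
    rw [← ENNReal.ofReal_natCast, ← ENNReal.ofReal_pow hε.le, ← ENNReal.ofReal_mul (ht₀ j),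
      ← ENNReal.ofReal_mul (Nat.cast_nonneg _), ← mul_assoc, hNt j,
      div_mul_cancel₀ _ (by positivity), ENNReal.ofReal_toReal (hv j)]
  · intro x r hr
    refine le_trans (measure_mono (inter_subset_inter_left _ ?_))
      (volume_iUnion_slab_inter_cube_le (i₀ := i₀) hpos (fun q => htε q.1) hε₁ x hr)
    exact iUnion_subset fun j => iUnion₂_subset fun i _ => subset_iUnion_of_subset (j, i) subset_rfl

section StepFunctions

variable {α ι M : Type*} [Fintype ι] [AddCommMonoid M] {S : ι → Set α}

lemma sum_indicator_apply_of_mem (hS : Pairwise (Function.onFun Disjoint S)) (c : ι → M)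
    {x : α} {j : ι} (hx : x ∈ S j) : ∑ i, (S i).indicator (fun _ => c i) x = c j := by
  rw [Finset.sum_eq_single j (fun i _ hij => indicator_of_notMem
    (fun hxi => Set.disjoint_left.1 (hS hij) hxi hx) _) (by simp), indicator_of_mem hx]

lemma sum_indicator_apply_of_notMem (c : ι → M) {x : α} (hx : x ∉ ⋃ i, S i) :
    ∑ i, (S i).indicator (fun _ => c i) x = 0 :=
  Finset.sum_eq_zero fun i _ => indicator_of_notMem (fun hxi => hx (mem_iUnion_of_mem i hxi)) _

lemma comp_sum_indicator_apply {N : Type*} [AddCommMonoid N]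
    (hS : Pairwise (Function.onFun Disjoint S)) (c : ι → M) {Φ : M → N} (hΦ : Φ 0 = 0) (x : α) :
    Φ (∑ i, (S i).indicator (fun _ => c i) x) = ∑ i, (S i).indicator (fun _ => Φ (c i)) x := by
  by_cases hx : x ∈ ⋃ i, S i
  · obtain ⟨j, hj⟩ := mem_iUnion.1 hx
    rw [sum_indicator_apply_of_mem hS _ hj, sum_indicator_apply_of_mem hS _ hj]
  · rw [sum_indicator_apply_of_notMem _ hx, sum_indicator_apply_of_notMem _ hx, hΦ]

lemma preimage_sum_indicator (hS : Pairwise (Function.onFun Disjoint S)) (c : ι → M) {T : Set M}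
    [DecidablePred (· ∈ T)] (hT : 0 ∉ T) :
    (fun x => ∑ i, (S i).indicator (fun _ => c i) x) ⁻¹' T =
      ⋃ i ∈ Finset.univ.filter (c · ∈ T), S i := by
  ext x
  simp only [mem_preimage, mem_iUnion, Finset.mem_filter, Finset.mem_univ, true_and, exists_prop]
  by_cases hx : x ∈ ⋃ i, S i
  · obtain ⟨j, hj⟩ := mem_iUnion.1 hx
    rw [sum_indicator_apply_of_mem hS _ hj]
    exact ⟨fun h => ⟨j, h, hj⟩, fun ⟨i, hi, hxi⟩ => by
      rwa [← sum_indicator_apply_of_mem hS c hxi, sum_indicator_apply_of_mem hS c hj] at hi⟩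
  · rw [sum_indicator_apply_of_notMem _ hx]
    exact ⟨fun h => (hT h).elim, fun ⟨i, _, hxi⟩ => (hx (mem_iUnion_of_mem i hxi)).elim⟩

lemma finite_range_sum_indicator (hS : Pairwise (Function.onFun Disjoint S)) (c : ι → M) :
    (range fun x => ∑ i, (S i).indicator (fun _ => c i) x).Finite := by
  refine ((finite_range c).insert 0).subset ?_
  rintro _ ⟨x, rfl⟩
  by_cases hx : x ∈ ⋃ i, S i
  · obtain ⟨j, hj⟩ := mem_iUnion.1 hx
    exact mem_insert_of_mem _ ⟨j, (sum_indicator_apply_of_mem hS c hj).symm⟩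
  · exact sum_indicator_apply_of_notMem c hx ▸ mem_insert _ _

variable [MeasurableSpace α] (μ : Measure α)

lemma measure_preimage_sum_indicator (hS : Pairwise (Function.onFun Disjoint S))
    (hSm : ∀ i, MeasurableSet (S i)) (c : ι → M) {T : Set M} [DecidablePred (· ∈ T)]
    (hT : 0 ∉ T) :
    μ ((fun x => ∑ i, (S i).indicator (fun _ => c i) x) ⁻¹' T) =
      ∑ i ∈ Finset.univ.filter (c · ∈ T), μ (S i) := by
  rw [preimage_sum_indicator hS c hT,
    measure_biUnion_finset (fun i _ j _ hij => hS hij) fun i _ => hSm i]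

lemma lintegral_ofReal_norm_rpow_sum_indicator {F : Type*} [NormedAddCommGroup F]
    (hS : Pairwise (Function.onFun Disjoint S)) (hSm : ∀ i, MeasurableSet (S i)) (c : ι → F)
    {p : ℝ} (hp : p ≠ 0) :
    ∫⁻ x, ENNReal.ofReal (‖∑ i, (S i).indicator (fun _ => c i) x‖ ^ p) ∂μ =
      ∑ i, ENNReal.ofReal (‖c i‖ ^ p) * μ (S i) := by
  rw [lintegral_congr fun x => comp_sum_indicator_apply hS c
      (Φ := fun y => ENNReal.ofReal (‖y‖ ^ p)) (by simp [Real.zero_rpow hp]) x,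
    lintegral_finsetSum _ fun i _ => measurable_const.indicator (hSm i)]
  exact Finset.sum_congr rfl fun i _ => lintegral_indicator_const (hSm i) _

end StepFunctions

theorem rearr_sum_indicator_eq {n : ℕ} {ι : Type*} [Fintype ι] {S S' : ι → Set (En n)}
    (hS : Pairwise (Function.onFun Disjoint S)) (hS' : Pairwise (Function.onFun Disjoint S'))
    (hSm : ∀ i, MeasurableSet (S i)) (hS'm : ∀ i, MeasurableSet (S' i))
    (hvol : ∀ i, volume (S i) = volume (S' i)) (a : ι → ℝ) (t : ℝ) :
    rearr n (fun x => ∑ i, (S i).indicator (fun _ => a i) x) t =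
      rearr n (fun x => ∑ i, (S' i).indicator (fun _ => a i) x) t := by
  classical
  have hdist : ∀ σ : ℝ≥0∞,
      volume {x | σ < ENNReal.ofReal ‖∑ i, (S i).indicator (fun _ => a i) x‖} =
        volume {x | σ < ENNReal.ofReal ‖∑ i, (S' i).indicator (fun _ => a i) x‖} := fun σ => by
    have hT : (0 : ℝ) ∉ {y : ℝ | σ < ENNReal.ofReal ‖y‖} := by simp
    exact (measure_preimage_sum_indicator _ hS hSm _ hT).trans
      ((Finset.sum_congr rfl fun i _ => hvol i).trans
        (measure_preimage_sum_indicator _ hS' hS'm _ hT).symm)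
  simp only [rearr, hdist]

namespace GClass

variable {n : ℕ} {p : ℝ} {φ : ℝ → ℝ}

lemma rpow_le_rpow_mul_pow (hφ : GClass n p φ) (hp : 0 < p) {t r : ℝ} (ht : 0 < t) (htr : t ≤ r) :
    φ r ^ p ≤ φ t ^ p * (r / t) ^ n := by
  have hr : 0 < r := ht.trans_le htr
  have h := Real.rpow_le_rpow (hφ.1 r hr).le (hφ.2 t r ht htr).2 hp.le
  rwa [Real.mul_rpow (hφ.1 t ht).le (by positivity), ← Real.rpow_mul (by positivity),
    div_mul_cancel₀ _ hp.ne', Real.rpow_natCast] at h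

lemma rpow_le_pow_of_one_le (hφ : GClass n p φ) (hp : 0 < p) (hφ₁ : φ 1 = 1) {r : ℝ}
    (hr : 1 ≤ r) : φ r ^ p ≤ r ^ n := by
  simpa [hφ₁] using hφ.rpow_le_rpow_mul_pow hp one_pos hr

lemma mul_rpow_mul_min_pow_le (hφ : GClass n p φ) (hp : 0 < p) {ε M r : ℝ} (hε : 0 < ε)
    (hr : 0 < r) (hM : 0 ≤ M) (hφε : φ ε * M ≤ 1) : (φ r * M) ^ p * min ε r ^ n ≤ r ^ n := by
  have hφε' : (φ ε * M) ^ p ≤ 1 :=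
    Real.rpow_le_one (mul_nonneg (hφ.1 ε hε).le hM) hφε hp.le
  rcases le_total r ε with hrε | hεr
  · rw [min_eq_right hrε]
    have h : (φ r * M) ^ p ≤ 1 := (Real.rpow_le_rpow (mul_nonneg (hφ.1 r hr).le hM)
      (mul_le_mul_of_nonneg_right (hφ.2 r ε hr hrε).1 hM) hp.le).trans hφε'
    exact mul_le_of_le_one_left (by positivity) h
  · rw [min_eq_left hεr]
    calc (φ r * M) ^ p * ε ^ n = φ r ^ p * M ^ p * ε ^ n := by
          rw [Real.mul_rpow (hφ.1 r hr).le hM]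
      _ ≤ φ ε ^ p * (r / ε) ^ n * M ^ p * ε ^ n := by
          gcongr; exact hφ.rpow_le_rpow_mul_pow hp hε hεr
      _ = (φ ε * M) ^ p * r ^ n := by
          rw [Real.mul_rpow (hφ.1 ε hε).le hM, div_pow]
          field_simp
      _ ≤ r ^ n := mul_le_of_le_one_left (by positivity) hφε'

end GClass

lemma exists_mul_le_one_of_tendsto_zero {φ : ℝ → ℝ}
    (hφ₀ : Tendsto φ (nhdsWithin 0 (Ioi 0)) (nhds 0)) (M : ℝ) :
    ∃ ε, 0 < ε ∧ ε ≤ 1 ∧ φ ε * M ≤ 1 := by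
  have hsmall : ∀ᶠ s in nhdsWithin (0 : ℝ) (Ioi 0), φ s * M < 1 :=
    (hφ₀.mul_const M).eventually_lt_const (by simp)
  obtain ⟨ε, hφε, hε⟩ := (hsmall.and (Ioc_mem_nhdsGT one_pos)).exists
  exact ⟨ε, hε.1, hε.2, hφε.le⟩

lemma ENNReal.mul_inv_mul_rpow_le_one {c V I : ℝ≥0∞} {p : ℝ} (hp : 0 < p) (h : c ^ p * I ≤ V) :
    c * (V⁻¹ * I) ^ (1 / p) ≤ 1 := by
  calc c * (V⁻¹ * I) ^ (1 / p) = (c ^ p * I / V) ^ (1 / p) := by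
        rw [ENNReal.div_eq_inv_mul, mul_left_comm,
          ENNReal.mul_rpow_of_nonneg (c ^ p) _ (by positivity),
          ← ENNReal.rpow_mul, mul_one_div_cancel hp.ne', ENNReal.rpow_one]
    _ ≤ 1 := ENNReal.rpow_le_one (ENNReal.div_le_of_le_mul (by rwa [one_mul])) (by positivity)

lemma setLIntegral_ofReal_norm_rpow_le {α F : Type*} [MeasurableSpace α] [NormedAddCommGroup F]
    {μ : Measure α} {g : α → F} {E : Set α} {M p : ℝ} (hp : 0 < p) (hgM : ∀ x, ‖g x‖ ≤ M)
    (hgE : ∀ x ∉ E, g x = 0) (hE : MeasurableSet E) (Q : Set α) :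
    ∫⁻ x in Q, ENNReal.ofReal (‖g x‖ ^ p) ∂μ ≤ ENNReal.ofReal (M ^ p) * μ (E ∩ Q) := by
  calc ∫⁻ x in Q, ENNReal.ofReal (‖g x‖ ^ p) ∂μ
      ≤ ∫⁻ x in Q, E.indicator (fun _ => ENNReal.ofReal (M ^ p)) x ∂μ := by
        refine lintegral_mono fun x => ?_
        by_cases hx : x ∈ E
        · rw [indicator_of_mem hx]
          exact ENNReal.ofReal_le_ofReal (Real.rpow_le_rpow (norm_nonneg _) (hgM x) hp.le)
        · rw [indicator_of_notMem hx, hgE x hx, norm_zero, Real.zero_rpow hp.ne',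
            ENNReal.ofReal_zero]
    _ = ENNReal.ofReal (M ^ p) * μ (E ∩ Q) := by
        rw [lintegral_indicator_const hE, Measure.restrict_apply hE]

theorem morreyNorm_le_one {n : ℕ} {p : ℝ} {φ : ℝ → ℝ} {g : En n → ℝ} {E : Set (En n)} {ε M : ℝ}
    (hp : 0 < p) (hφ : GClass n p φ) (hφ₁ : φ 1 = 1) (hε : 0 < ε) (hφε : φ ε * M ≤ 1)
    (hgM : ∀ x, ‖g x‖ ≤ M) (hgE : ∀ x ∉ E, g x = 0) (hEm : MeasurableSet E)
    (hE : ∀ x r, r ≤ 1 → volume (E ∩ cube n x r) ≤ ENNReal.ofReal (min ε r) ^ n)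
    (hg : ∫⁻ x, ENNReal.ofReal (‖g x‖ ^ p) ≤ 1) : morreyNorm n p φ g ≤ 1 := by
  refine iSup₂_le fun x r => iSup_le fun hr => ENNReal.mul_inv_mul_rpow_le_one hp ?_
  rw [volume_cube x hr.le, ENNReal.ofReal_rpow_of_nonneg (hφ.1 r hr).le hp.le]
  rcases le_total r 1 with hr₁ | hr₁
  · have hM : 0 ≤ M := (norm_nonneg _).trans (hgM x)
    calc ENNReal.ofReal (φ r ^ p) * ∫⁻ y in cube n x r, ENNReal.ofReal (‖g y‖ ^ p)
        ≤ ENNReal.ofReal (φ r ^ p) * (ENNReal.ofReal (M ^ p) * ENNReal.ofReal (min ε r) ^ n) := by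
          gcongr
          exact (setLIntegral_ofReal_norm_rpow_le hp hgM hgE hEm _).trans
            (mul_le_mul_right (hE x r hr₁) _)
      _ = ENNReal.ofReal ((φ r * M) ^ p * min ε r ^ n) := by
          rw [Real.mul_rpow (hφ.1 r hr).le hM, ← ENNReal.ofReal_pow (le_min hε.le hr.le),
            ← ENNReal.ofReal_mul (Real.rpow_nonneg hM p),
            ← ENNReal.ofReal_mul (Real.rpow_nonneg (hφ.1 r hr).le p), mul_assoc]
      _ ≤ ENNReal.ofReal (r ^ n) :=
          ENNReal.ofReal_le_ofReal (hφ.mul_rpow_mul_min_pow_le hp hε hr hM hφε)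
  · calc ENNReal.ofReal (φ r ^ p) * ∫⁻ y in cube n x r, ENNReal.ofReal (‖g y‖ ^ p)
        ≤ ENNReal.ofReal (r ^ n) * 1 :=
          mul_le_mul' (ENNReal.ofReal_le_ofReal (hφ.rpow_le_pow_of_one_le hp hφ₁ hr₁))
            ((setLIntegral_le_lintegral _ _).trans hg)
      _ = ENNReal.ofReal (r ^ n) := mul_one _

theorem statement3_general (n : ℕ) (hn : 0 < n) (p : ℝ) (hp : 0 < p) (φ : ℝ → ℝ)
    (hφ : GClass n p φ) (hφ1 : φ 1 = 1)
    (hφ0 : Filter.Tendsto φ (nhdsWithin 0 (Set.Ioi 0)) (nhds 0))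
    (m : ℕ) (A : Fin m → Set (En n))
    (hAmeas : ∀ j, MeasurableSet (A j))
    (hAfin : ∀ j, volume (A j) ≠ ⊤)
    (hAdisj : Pairwise (Function.onFun Disjoint A))
    (a : Fin m → ℝ)
    (f : En n → ℝ) (hf : f = fun x => ∑ j, Set.indicator (A j) (fun _ => a j) x)
    (hnorm : (∫⁻ x, ENNReal.ofReal (|f x| ^ p)) = 1) :
    ∃ g : En n → ℝ, Measurable g ∧ (Set.range g).Finite ∧
      (∀ t : ℝ, 0 < t → rearr n g t = rearr n f t) ∧ morreyNorm n p φ g ≤ 1 := by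
  obtain ⟨ε, hε, hε₁, hφε⟩ := exists_mul_le_one_of_tendsto_zero hφ0 (∑ j, ‖a j‖)
  obtain ⟨S, hSm, hSdisj, hSvol, hScube⟩ :=
    exists_sparse_disjoint_family ⟨0, hn⟩ hε hε₁ (fun j => volume (A j)) hAfin
  have hg : ∫⁻ x, ENNReal.ofReal (‖∑ j, (S j).indicator (fun _ => a j) x‖ ^ p) = 1 := by
    rw [lintegral_ofReal_norm_rpow_sum_indicator _ hSdisj hSm a hp.ne', ← hnorm, hf]
    simp only [lintegral_ofReal_norm_rpow_sum_indicator _ hAdisj hAmeas a hp.ne', hSvol,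
      ← Real.norm_eq_abs]
  have hgM : ∀ x, ‖∑ j, (S j).indicator (fun _ => a j) x‖ ≤ ∑ j, ‖a j‖ := fun x =>
    (norm_sum_le _ _).trans (Finset.sum_le_sum fun j _ => norm_indicator_le_norm_self _ _)
  refine ⟨fun x => ∑ j, (S j).indicator (fun _ => a j) x,
    Finset.measurable_sum _ fun j _ => measurable_const.indicator (hSm j),
    finite_range_sum_indicator hSdisj a,
    fun t _ => hf ▸ rearr_sum_indicator_eq hSdisj hAdisj hSm hAmeas hSvol a t,
    morreyNorm_le_one hp hφ hφ1 hε hφε hgM (fun x hx => sum_indicator_apply_of_notMem a hx)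
      (MeasurableSet.iUnion hSm) hScube hg.le⟩

/-- (Lemma on simple functions.) If `φ ∈ 𝒢_p`, `φ(1)=1`, `lim_{t→0⁺} φ(t)=0`,
and `f = Σ_j a_j χ_{A_j}` is a simple function with `‖f|L_p‖ = 1`, then there is a simple
function `g` equimeasurable with `f` (same decreasing rearrangement) and `‖g|ℳ_{φ,p}‖ ≤ 1`. -/
theorem statement3 (n : ℕ) (hn : 0 < n) (p : ℝ) (hp : 0 < p) (φ : ℝ → ℝ)
    (hφ : GClass n p φ) (hφ1 : φ 1 = 1)
    (hφ0 : Filter.Tendsto φ (nhdsWithin 0 (Set.Ioi 0)) (nhds 0))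
    (m : ℕ) (hm : 0 < m) (A : Fin m → Set (En n))
    (hAmeas : ∀ j, MeasurableSet (A j))
    (hAfin : ∀ j, volume (A j) ≠ ⊤)
    (hAdisj : Pairwise (Function.onFun Disjoint A))
    (a : Fin m → ℝ) (ha_pos : ∀ j, 0 < a j)
    (ha_anti : ∀ j k : Fin m, j < k → a k < a j)
    (f : En n → ℝ) (hf : f = fun x => ∑ j, Set.indicator (A j) (fun _ => a j) x)
    (hnorm : (∫⁻ x, ENNReal.ofReal (|f x| ^ p)) = 1) :
    ∃ g : En n → ℝ, Measurable g ∧ (Set.range g).Finite ∧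
      (∀ t : ℝ, 0 < t → rearr n g t = rearr n f t) ∧ morreyNorm n p φ g ≤ 1 :=
  statement3_general n hn p hp φ hφ hφ1 hφ0 m A hAmeas hAfin hAdisj a f hf hnorm
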